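/- arXiv:2603.23558 — 6 statements merged into one kernel-verified Lean document; each statement's English description precedes it below -/
import Mathlib

section
/- Let Ω be a nonempty finite set, μ : 2^Ω → ℝ a supermodular set function with μ(∅) = 0, and λ* ∈ ℝ such that max_{∅ ≠ B ⊆ Ω} (μ(B) − λ*|B|) = 0. Then the union A of all nonempty maximizers of B ↦ μ(B) − λ*|B| is itself a maximizer (hence the maximizer of maximum cardinality), and A = { i ∈ Ω : max_{B ⊆ Ω∖{i}} (μ(B ∪ {i}) − λ*|B ∪ {i}|) = 0 }. -/
/-- Let `μ` be supermodular with `μ ∅ = 0` on a nonempty finite set `Ω` and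
`λ*` be such that the maximum of `μ B − λ* |B|` over nonempty `B ⊆ Ω` equals `0`. Then the
union `A` of all nonempty maximizers of `B ↦ μ B − λ* |B|` is itself a (nonempty) maximizer
(hence the maximizer of maximum cardinality: it contains every maximizer), and
`A = {i ∈ Ω : max_{B ⊆ Ω∖{i}} (μ (B ∪ {i}) − λ* |B ∪ {i}|) = 0}`. -/
theorem stmt_4 {Ω : Type*} [Fintype Ω] [Nonempty Ω] [DecidableEq Ω]
    (μ : Finset Ω → ℝ) (h0 : μ ∅ = 0)
    (hsup : ∀ A B : Finset Ω, μ A + μ B ≤ μ (A ∪ B) + μ (A ∩ B))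
    (lam : ℝ)
    (hg : IsGreatest {x : ℝ | ∃ B : Finset Ω, B.Nonempty ∧ x = μ B - lam * B.card} 0)
    (A : Finset Ω)
    (hA : ∀ i : Ω, i ∈ A ↔ ∃ B : Finset Ω, B.Nonempty ∧
        (∀ C : Finset Ω, C.Nonempty → μ C - lam * C.card ≤ μ B - lam * B.card) ∧ i ∈ B) :
    (A.Nonempty ∧
      (∀ C : Finset Ω, C.Nonempty → μ C - lam * C.card ≤ μ A - lam * A.card) ∧
      (∀ B : Finset Ω, B.Nonempty →
        (∀ C : Finset Ω, C.Nonempty → μ C - lam * C.card ≤ μ B - lam * B.card) → B ⊆ A)) ∧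
    (∀ i : Ω, i ∈ A ↔
      IsGreatest
        {x : ℝ | ∃ B : Finset Ω, i ∉ B ∧ x = μ (insert i B) - lam * (insert i B).card} 0) := by
  have hub : ∀ C : Finset Ω, C.Nonempty → μ C - lam * C.card ≤ 0 := fun C hC =>
    hg.2 ⟨C, hC, rfl⟩
  obtain ⟨B₀, hB₀ne, hB₀⟩ := hg.1
  have hB₀0 : μ B₀ - lam * B₀.card = 0 := hB₀.symm
  have hmaxzero : ∀ B : Finset Ω, B.Nonempty →
      (∀ C : Finset Ω, C.Nonempty → μ C - lam * C.card ≤ μ B - lam * B.card) →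
      μ B - lam * B.card = 0 := by
    intro B hBne hBmax
    have h1 := hBmax B₀ hB₀ne
    have h2 := hub B hBne
    linarith
  have hzeromax : ∀ B : Finset Ω, μ B - lam * B.card = 0 →
      (∀ C : Finset Ω, C.Nonempty → μ C - lam * C.card ≤ μ B - lam * B.card) := by
    intro B hB0 C hC
    rw [hB0]; exact hub C hC
  have hsubA : ∀ B : Finset Ω, B.Nonempty →
      (∀ C : Finset Ω, C.Nonempty → μ C - lam * C.card ≤ μ B - lam * B.card) → B ⊆ A := by
    intro B hBne hBmax j hj
    exact (hA j).2 ⟨B, hBne, hBmax, hj⟩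
  have hfle : ∀ C : Finset Ω, μ C - lam * C.card ≤ 0 := by
    intro C
    rcases C.eq_empty_or_nonempty with h | h
    · simp [h, h0]
    · exact hub C h
  have hunion : ∀ B C : Finset Ω, μ B - lam * B.card = 0 → μ C - lam * C.card = 0 →
      μ (B ∪ C) - lam * (B ∪ C).card = 0 := by
    intro B C hB hC
    have h1 := hsup B C
    have hcard : (B ∪ C).card + (B ∩ C).card = B.card + C.card :=
      Finset.card_union_add_card_inter B C
    have h2 := hfle (B ∪ C)
    have h3 := hfle (B ∩ C)
    have hcast : ((B ∪ C).card : ℝ) + (B ∩ C).card = B.card + C.card := by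
      exact_mod_cast hcard
    have hc2 : lam * ((B ∪ C).card : ℝ) + lam * (B ∩ C).card =
        lam * B.card + lam * C.card := by
      rw [← mul_add, hcast, mul_add]
    linarith
  have key : ∀ T : Finset Ω, T ⊆ A → ∃ D : Finset Ω, D.Nonempty ∧ T ⊆ D ∧ D ⊆ A ∧
      μ D - lam * D.card = 0 := by
    intro T
    induction T using Finset.induction_on with
    | empty =>
      intro _
      exact ⟨B₀, hB₀ne, Finset.empty_subset _, hsubA B₀ hB₀ne (hzeromax B₀ hB₀0), hB₀0⟩
    | @insert i T hiT ih =>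
      intro hsub
      obtain ⟨Bi, hBine, hBimax, hiBi⟩ :=
        (hA i).1 (hsub (Finset.mem_insert_self i T))
      have hBi0 := hmaxzero Bi hBine hBimax
      obtain ⟨D, hDne, hTD, hDA, hD0⟩ :=
        ih (fun j hj => hsub (Finset.mem_insert_of_mem hj))
      refine ⟨D ∪ Bi, hDne.mono Finset.subset_union_left, ?_, ?_, hunion D Bi hD0 hBi0⟩
      · exact Finset.insert_subset (Finset.mem_union_right _ hiBi)
          (hTD.trans Finset.subset_union_left)
      · exact Finset.union_subset hDA (hsubA Bi hBine hBimax)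
  obtain ⟨D, hDne, hAD, hDA, hD0⟩ := key A (subset_refl A)
  have hDeq : D = A := Finset.Subset.antisymm hDA hAD
  have hA0 : μ A - lam * A.card = 0 := hDeq ▸ hD0
  have hAne : A.Nonempty := hDeq ▸ hDne
  refine ⟨⟨hAne, hzeromax A hA0, hsubA⟩, ?_⟩
  intro i
  constructor
  · intro hi
    constructor
    · refine ⟨A.erase i, Finset.notMem_erase i A, ?_⟩
      rw [Finset.insert_erase hi, hA0]
    · rintro x ⟨B, hiB, rfl⟩
      exact hub _ (Finset.insert_nonempty i B)
  · rintro ⟨⟨B, hiB, hx⟩, -⟩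
    exact (hA i).2 ⟨insert i B, Finset.insert_nonempty i B,
      hzeromax _ hx.symm, Finset.mem_insert_self i B⟩
end

section
/- Let π ∈ [0,1]^n satisfy 1 = π_1 ≥ π_2 ≥ … ≥ π_n > 0, set π_{n+1} = 0, and define the possibility measure Π on Ω = {1,…,n} by Π(A) = max_{i∈A} π_i for A ≠ ∅ and Π(∅) = 0. Then for every α ≥ 0: min_{A ⊆ Ω} (Π(A) − α|A|) = min_{j ∈ {1,…,n+1}} (π_j − α(n − j + 1)). -/
/-- Let `π ∈ [0,1]^n` with `1 = π 1 ≥ π 2 ≥ … ≥ π n > 0` and `π (n+1) = 0`,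
and let `Π(A) = max_{i ∈ A} π i` (with `Π ∅ = 0`) be the possibility measure on
`Ω = {1,…,n}`. Then for every `α ≥ 0`:
`min_{A ⊆ Ω} (Π(A) − α|A|) = min_{j ∈ {1,…,n+1}} (π j − α(n − j + 1))`. -/
theorem stmt_9 {n : ℕ} (hn : 0 < n) (π : ℕ → ℝ)
    (h1 : π 1 = 1)
    (hmono : ∀ i : ℕ, 1 ≤ i → i < n → π (i + 1) ≤ π i)
    (hpos : 0 < π n)
    (hend : π (n + 1) = 0)
    (α : ℝ) (hα : 0 ≤ α) :
    sInf {x : ℝ | ∃ A : Finset ℕ, A ⊆ Finset.Icc 1 n ∧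
        x = (if h : A.Nonempty then A.sup' h π else 0) - α * A.card}
      = sInf {x : ℝ | ∃ j ∈ Finset.Icc 1 (n + 1),
          x = π j - α * ((n : ℝ) - (j : ℝ) + 1)} := by
  set L := {x : ℝ | ∃ A : Finset ℕ, A ⊆ Finset.Icc 1 n ∧
        x = (if h : A.Nonempty then A.sup' h π else 0) - α * A.card} with hLdef
  set R := {x : ℝ | ∃ j ∈ Finset.Icc 1 (n + 1),
          x = π j - α * ((n : ℝ) - (j : ℝ) + 1)} with hRdef
  -- antitonicity
  have anti : ∀ i j : ℕ, 1 ≤ i → i ≤ j → j ≤ n → π j ≤ π i := by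
    intro i j hi hij hjn
    induction j with
    | zero => omega
    | succ k ih =>
      rcases Nat.eq_or_lt_of_le hij with h | h
      · rw [h]
      · exact (hmono k (by omega) (by omega)).trans (ih (by omega) (by omega))
  have hnn : ∀ j : ℕ, 1 ≤ j → j ≤ n + 1 → 0 ≤ π j := by
    intro j h1j hj
    rcases Nat.eq_or_lt_of_le hj with h | h
    · rw [h, hend]
    · exact le_trans hpos.le (anti j n h1j (by omega) le_rfl)
  -- sup' over Icc j n equals π j
  have hsup : ∀ j : ℕ, 1 ≤ j → j ≤ n → ∀ (h : (Finset.Icc j n).Nonempty),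
      (Finset.Icc j n).sup' h π = π j := by
    intro j h1j hjn h
    apply le_antisymm
    · apply Finset.sup'_le
      intro i hi
      rw [Finset.mem_Icc] at hi
      exact anti j i h1j hi.1 hi.2
    · exact Finset.le_sup' π (Finset.mem_Icc.mpr ⟨le_rfl, hjn⟩)
  -- nonemptiness
  have hLne : L.Nonempty := by
    refine ⟨0, ∅, Finset.empty_subset _, ?_⟩
    simp
  have hRne : R.Nonempty := by
    refine ⟨0, n + 1, Finset.mem_Icc.mpr ⟨by omega, le_rfl⟩, ?_⟩
    push_cast
    rw [hend]; ring
  -- bounded below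
  have hLbdd : BddBelow L := by
    refine ⟨-(α * n), ?_⟩
    rintro x ⟨A, hA, rfl⟩
    have hcard : (A.card : ℝ) ≤ n := by
      have := Finset.card_le_card hA
      rw [Nat.card_Icc] at this
      exact_mod_cast le_trans this (by omega)
    have hS : 0 ≤ (if h : A.Nonempty then A.sup' h π else 0) := by
      split_ifs with h
      · obtain ⟨i, hi⟩ := h
        have hi' := Finset.mem_Icc.mp (hA hi)
        exact le_trans (hnn i hi'.1 (by omega)) (Finset.le_sup' π hi)
      · rfl
    nlinarith
  have hRbdd : BddBelow R := by
    refine ⟨-(α * n), ?_⟩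
    rintro x ⟨j, hj, rfl⟩
    rw [Finset.mem_Icc] at hj
    have h0 : (0:ℝ) ≤ (n : ℝ) - (j : ℝ) + 1 := by
      have : (j : ℝ) ≤ (n : ℝ) + 1 := by exact_mod_cast hj.2
      linarith
    have h1' : (n : ℝ) - (j : ℝ) + 1 ≤ n := by
      have : (1 : ℝ) ≤ (j : ℝ) := by exact_mod_cast hj.1
      linarith
    have := hnn j hj.1 hj.2
    nlinarith
  -- R ⊆ L
  have hRL : R ⊆ L := by
    rintro x ⟨j, hj, rfl⟩
    rw [Finset.mem_Icc] at hj
    rcases Nat.eq_or_lt_of_le hj.2 with h | h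
    · refine ⟨∅, Finset.empty_subset _, ?_⟩
      subst h
      rw [hend]
      simp
    · have hjn : j ≤ n := by omega
      have hne : (Finset.Icc j n).Nonempty := ⟨j, Finset.mem_Icc.mpr ⟨le_rfl, hjn⟩⟩
      refine ⟨Finset.Icc j n, Finset.Icc_subset_Icc hj.1 le_rfl, ?_⟩
      rw [dif_pos hne, hsup j hj.1 hjn hne, Nat.card_Icc]
      have : ((n + 1 - j : ℕ) : ℝ) = (n : ℝ) - (j : ℝ) + 1 := by
        have := hj.1
        push_cast [Nat.cast_sub (by omega : j ≤ n + 1)]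
        ring
      rw [this]
  apply le_antisymm
  · exact le_csInf hRne fun x hx => csInf_le hLbdd (hRL hx)
  · refine le_csInf hLne ?_
    rintro x ⟨A, hA, rfl⟩
    by_cases h : A.Nonempty
    · set m := A.min' h with hm
      have hmA : m ∈ A := A.min'_mem h
      have hm' := Finset.mem_Icc.mp (hA hmA)
      have hsub : A ⊆ Finset.Icc m n := by
        intro i hi
        rw [Finset.mem_Icc]
        exact ⟨A.min'_le i hi, (Finset.mem_Icc.mp (hA hi)).2⟩
      have hcard : (A.card : ℝ) ≤ (n : ℝ) - (m : ℝ) + 1 := by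
        have h2 := Finset.card_le_card hsub
        rw [Nat.card_Icc] at h2
        have : ((n + 1 - m : ℕ) : ℝ) = (n : ℝ) - (m : ℝ) + 1 := by
          push_cast [Nat.cast_sub (by omega : m ≤ n + 1)]
          ring
        rw [← this]; exact_mod_cast h2
      have hsupA : A.sup' h π = π m := by
        apply le_antisymm
        · apply Finset.sup'_le
          intro i hi
          have hi' := Finset.mem_Icc.mp (hA hi)
          exact anti m i hm'.1 (A.min'_le i hi) hi'.2
        · exact Finset.le_sup' π hmA
      have hmem : π m - α * ((n : ℝ) - (m : ℝ) + 1) ∈ R :=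
        ⟨m, Finset.mem_Icc.mpr ⟨hm'.1, by omega⟩, rfl⟩
      refine le_trans (csInf_le hRbdd hmem) ?_
      rw [dif_pos h, hsupA]
      nlinarith
    · rw [dif_neg h]
      rw [Finset.not_nonempty_iff_eq_empty] at h
      subst h
      simp only [Finset.card_empty, Nat.cast_zero, mul_zero, sub_zero]
      refine csInf_le hRbdd ⟨n + 1, Finset.mem_Icc.mpr ⟨by omega, le_rfl⟩, ?_⟩
      rw [hend]
      push_cast
      ring
end

section
/- Let π ∈ [0,1]^n satisfy 1 = π_1 ≥ π_2 ≥ … ≥ π_n > 0, set π_{n+1} = 0, define Π(A) = max_{i∈A} π_i for A ≠ ∅ and Π(∅) = 0, and fix α ≥ 0. Let j* be the smallest index j ∈ {1,…,n+1} minimizing π_j − α(n − j + 1). Then the set {j*, j*+1, …, n} (interpreted as ∅ when j* = n+1) is a minimizer of A ↦ Π(A) − α|A| over subsets of Ω = {1,…,n}, and it contains every other minimizer; i.e., it is the unique minimizer of maximum cardinality. -/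
/-- With `π` sorted as `1 = π 1 ≥ … ≥ π n > 0`, `π (n+1) = 0`,
`Π(A) = max_{i∈A} π i` (and `Π ∅ = 0`), `α ≥ 0`, and `j` the smallest index in `{1,…,n+1}`
minimizing `π j − α(n − j + 1)`, the set `{j, …, n}` (empty when `j = n+1`) is a minimizer
of `A ↦ Π(A) − α|A|` over subsets of `Ω = {1,…,n}`, and it contains every other minimizer
(it is the unique minimizer of maximum cardinality). -/
theorem stmt_10 {n : ℕ} (hn : 0 < n) (π : ℕ → ℝ)
    (h1 : π 1 = 1)
    (hmono : ∀ i : ℕ, 1 ≤ i → i < n → π (i + 1) ≤ π i)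
    (hpos : 0 < π n)
    (hend : π (n + 1) = 0)
    (α : ℝ) (hα : 0 ≤ α)
    (j : ℕ) (hj : j ∈ Finset.Icc 1 (n + 1))
    (hjmin : ∀ k ∈ Finset.Icc 1 (n + 1),
      π j - α * ((n : ℝ) - (j : ℝ) + 1) ≤ π k - α * ((n : ℝ) - (k : ℝ) + 1))
    (hjsmall : ∀ k ∈ Finset.Icc 1 (n + 1),
      π k - α * ((n : ℝ) - (k : ℝ) + 1) ≤ π j - α * ((n : ℝ) - (j : ℝ) + 1) → j ≤ k) :
    (∀ A : Finset ℕ, A ⊆ Finset.Icc 1 n →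
      (if h : (Finset.Icc j n).Nonempty then (Finset.Icc j n).sup' h π else 0)
          - α * (Finset.Icc j n).card
        ≤ (if h : A.Nonempty then A.sup' h π else 0) - α * A.card) ∧
    (∀ A : Finset ℕ, A ⊆ Finset.Icc 1 n →
      (if h : A.Nonempty then A.sup' h π else 0) - α * A.card
        ≤ (if h : (Finset.Icc j n).Nonempty then (Finset.Icc j n).sup' h π else 0)
            - α * (Finset.Icc j n).card →
      A ⊆ Finset.Icc j n) := by
  obtain ⟨hj1, hjn1⟩ := Finset.mem_Icc.mp hj
  -- antitonicity of π on [1, n]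
  have anti : ∀ a b : ℕ, 1 ≤ a → a ≤ b → b ≤ n → π b ≤ π a := by
    intro a b ha hab hb
    induction b with
    | zero => omega
    | succ m ih =>
      rcases Nat.eq_or_lt_of_le hab with h | h
      · rw [h]
      · have hma : a ≤ m := Nat.lt_succ_iff.mp h
        have h1m : 1 ≤ m := le_trans ha hma
        calc π (m + 1) ≤ π m := hmono m h1m (by omega)
          _ ≤ π a := ih hma (by omega)
  -- the value on S = Icc j n
  have hScard : ((Finset.Icc j n).card : ℝ) = (n : ℝ) - j + 1 := by
    rw [Nat.card_Icc]
    rcases le_or_gt j (n + 1) with h | h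
    · rw [Nat.cast_sub h]; push_cast; ring
    · omega
  have hSval : (if h : (Finset.Icc j n).Nonempty then (Finset.Icc j n).sup' h π else 0)
      - α * (Finset.Icc j n).card = π j - α * ((n : ℝ) - (j : ℝ) + 1) := by
    rcases le_or_gt j n with h | h
    · have hne : (Finset.Icc j n).Nonempty := ⟨j, Finset.mem_Icc.mpr ⟨le_refl j, h⟩⟩
      rw [dif_pos hne, hScard]
      congr 1
      apply le_antisymm
      · apply Finset.sup'_le
        intro i hi
        obtain ⟨hi1, hi2⟩ := Finset.mem_Icc.mp hi
        exact anti j i hj1 hi1 hi2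
      · exact Finset.le_sup' π (Finset.mem_Icc.mpr ⟨le_refl j, h⟩)
    · have hj' : j = n + 1 := by omega
      have hempty : Finset.Icc j n = ∅ := Finset.Icc_eq_empty (by omega)
      rw [hempty, hj']
      simp [hend]
  -- key bound for nonempty A
  have key : ∀ A : Finset ℕ, A ⊆ Finset.Icc 1 n → ∀ hA : A.Nonempty,
      (A.min' hA ∈ Finset.Icc 1 (n + 1)) ∧
      π (A.min' hA) - α * ((n : ℝ) - (A.min' hA : ℝ) + 1) ≤ A.sup' hA π - α * A.card := by
    intro A hAsub hA
    set m := A.min' hA with hm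
    have hmA : m ∈ A := A.min'_mem hA
    have hm1n : m ∈ Finset.Icc 1 n := hAsub hmA
    obtain ⟨hm1, hmn⟩ := Finset.mem_Icc.mp hm1n
    refine ⟨Finset.mem_Icc.mpr ⟨hm1, by omega⟩, ?_⟩
    have hsup : π m ≤ A.sup' hA π := Finset.le_sup' π hmA
    have hcard : (A.card : ℝ) ≤ (n : ℝ) - m + 1 := by
      have hsub2 : A ⊆ Finset.Icc m n := by
        intro a ha
        obtain ⟨_, ha2⟩ := Finset.mem_Icc.mp (hAsub ha)
        exact Finset.mem_Icc.mpr ⟨A.min'_le a ha, ha2⟩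
      have := Finset.card_le_card hsub2
      have h2 : (Finset.Icc m n).card = n + 1 - m := Nat.card_Icc m n
      have h3 : (A.card : ℝ) ≤ ((n + 1 - m : ℕ) : ℝ) := by exact_mod_cast h2 ▸ this
      calc (A.card : ℝ) ≤ ((n + 1 - m : ℕ) : ℝ) := h3
        _ = (n : ℝ) - m + 1 := by rw [Nat.cast_sub (by omega)]; push_cast; ring
    have : α * A.card ≤ α * ((n : ℝ) - m + 1) := mul_le_mul_of_nonneg_left hcard hα
    linarith
  constructor
  · intro A hAsub
    rw [hSval]
    by_cases hA : A.Nonempty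
    · rw [dif_pos hA]
      obtain ⟨hmem, hbound⟩ := key A hAsub hA
      exact le_trans (hjmin _ hmem) hbound
    · rw [dif_neg hA]
      have hA0 : A = ∅ := Finset.not_nonempty_iff_eq_empty.mp hA
      have := hjmin (n + 1) (Finset.mem_Icc.mpr ⟨by omega, le_refl _⟩)
      rw [hend] at this
      push_cast at this
      rw [hA0]
      simp
      linarith
  · intro A hAsub hle
    by_cases hA : A.Nonempty
    · rw [dif_pos hA, hSval] at hle
      obtain ⟨hmem, hbound⟩ := key A hAsub hA
      have hjm : j ≤ A.min' hA := hjsmall _ hmem (le_trans hbound hle)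
      intro a ha
      obtain ⟨_, ha2⟩ := Finset.mem_Icc.mp (hAsub ha)
      exact Finset.mem_Icc.mpr ⟨le_trans hjm (A.min'_le a ha), ha2⟩
    · rw [Finset.not_nonempty_iff_eq_empty.mp hA]
      exact Finset.empty_subset _
end

section
/- Let [l_i, u_i] ⊆ [0,1] for i = 1,…,n be intervals with 0 < u_i for all i, Σ_{i=1}^n l_i < 1, and Σ_{i=1}^n u_i > 1, and let 𝒫 = {p ∈ Δ_n : l_i ≤ p_i ≤ u_i for all i}. Then p maximizes the Shannon entropy H(p) = −Σ_{i=1}^n p_i log p_i over 𝒫 if and only if there exists x ∈ ℝ such that Σ_{i=1}^n min{max{x, l_i}, u_i} = 1 and p_i = min{max{x, l_i}, u_i} for all i. -/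
private lemma entA (s t : ℝ) (hs : 0 < s) (ht : 0 ≤ t) :
    0 ≤ t * Real.log t - s * Real.log s - (Real.log s + 1) * (t - s) ∧
    (t * Real.log t - s * Real.log s - (Real.log s + 1) * (t - s) = 0 → t = s) := by
  rcases ht.eq_or_lt with h | h
  · subst h
    simp only [Real.log_zero, zero_mul, mul_zero, zero_sub, mul_neg, sub_neg_eq_add]
    constructor
    · nlinarith
    · intro h0; nlinarith
  · have hy : 0 < s / t := div_pos hs h
    have hkey : t * Real.log t - s * Real.log s - (Real.log s + 1) * (t - s)
        = t * (s / t - 1 - Real.log (s / t)) := by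
      rw [Real.log_div hs.ne' h.ne']
      field_simp
      ring
    rw [hkey]
    have hlog : Real.log (s / t) ≤ s / t - 1 := Real.log_le_sub_one_of_pos hy
    constructor
    · exact mul_nonneg h.le (by linarith)
    · intro h0
      have h1 : s / t - 1 - Real.log (s / t) = 0 := by
        rcases mul_eq_zero.mp h0 with h' | h'
        · exact absurd h' h.ne'
        · exact h'
      by_contra hne
      have hne1 : s / t ≠ 1 := by
        intro hh; exact hne ((div_eq_one_iff_eq h.ne').mp hh).symm
      have := Real.log_lt_sub_one_of_pos hy hne1
      linarith

private lemma clip_max {n : ℕ} (l u : Fin n → ℝ)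
    (hlu : ∀ i, l i ≤ u i) (hupos : ∀ i, 0 < u i)
    (x : ℝ) (hx : 0 < x) (hsx : (∑ i, min (max x (l i)) (u i)) = 1)
    (q : Fin n → ℝ) (hq0 : ∀ i, 0 ≤ q i) (hq1 : (∑ i, q i) = 1)
    (hqlu : ∀ i, l i ≤ q i ∧ q i ≤ u i) :
    (∑ i, (fun i => min (max x (l i)) (u i)) i * Real.log ((fun i => min (max x (l i)) (u i)) i))
      ≤ ∑ i, q i * Real.log (q i) ∧
    (∑ i, q i * Real.log (q i) =
      (∑ i, (fun i => min (max x (l i)) (u i)) i * Real.log ((fun i => min (max x (l i)) (u i)) i))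
      → ∀ i, q i = min (max x (l i)) (u i)) := by
  set p : Fin n → ℝ := fun i => min (max x (l i)) (u i) with hp
  have hppos : ∀ i, 0 < p i := fun i =>
    lt_min (lt_of_lt_of_le hx (le_max_left _ _)) (hupos i)
  set A : Fin n → ℝ := fun i =>
    q i * Real.log (q i) - p i * Real.log (p i) - (Real.log (p i) + 1) * (q i - p i) with hA
  set B : Fin n → ℝ := fun i => (q i - p i) * (Real.log (p i) - Real.log x) with hB
  have hAnn : ∀ i, 0 ≤ A i := fun i => (entA (p i) (q i) (hppos i) (hq0 i)).1
  have hBnn : ∀ i, 0 ≤ B i := by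
    intro i
    rcases le_total x (l i) with hc | hc
    · have hpe : p i = l i := by
        simp only [hp]; rw [max_eq_right hc, min_eq_left (hlu i)]
      apply mul_nonneg
      · rw [hpe]; linarith [(hqlu i).1]
      · rw [hpe]; have := Real.log_le_log hx hc; linarith
    · have hmax : max x (l i) = x := max_eq_left hc
      rcases le_total x (u i) with hd | hd
      · have hpe : p i = x := by simp only [hp]; rw [hmax, min_eq_left hd]
        simp only [hB, hpe, sub_self, mul_zero]; exact le_refl 0
      · have hpe : p i = u i := by simp only [hp]; rw [hmax, min_eq_right hd]
        have h1 : q i - p i ≤ 0 := by rw [hpe]; linarith [(hqlu i).2]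
        have h2 : Real.log (p i) - Real.log x ≤ 0 := by
          rw [hpe]; have := Real.log_le_log (hupos i) hd; linarith
        have h3 := mul_nonneg (neg_nonneg.2 h1) (neg_nonneg.2 h2)
        rw [neg_mul_neg] at h3
        exact h3
  have hsump : (∑ i, p i) = 1 := hsx
  have hsumAB : (∑ i, (A i + B i)) = ∑ i, q i * Real.log (q i) - ∑ i, p i * Real.log (p i) := by
    have h1 : ∀ i ∈ Finset.univ, A i + B i =
        (q i * Real.log (q i) - p i * Real.log (p i)) - (1 + Real.log x) * (q i - p i) := by
      intro i _; simp only [hA, hB]; ring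
    rw [Finset.sum_congr rfl h1, Finset.sum_sub_distrib, ← Finset.mul_sum,
      Finset.sum_sub_distrib, Finset.sum_sub_distrib, hq1, hsump]
    ring
  have hABnn : (0:ℝ) ≤ ∑ i, (A i + B i) :=
    Finset.sum_nonneg fun i _ => add_nonneg (hAnn i) (hBnn i)
  constructor
  · linarith [hsumAB ▸ hABnn]
  · intro heq i
    have hzero : (∑ i, (A i + B i)) = 0 := by rw [hsumAB, heq]; ring
    have := (Finset.sum_eq_zero_iff_of_nonneg
      (fun i _ => add_nonneg (hAnn i) (hBnn i))).mp hzero i (Finset.mem_univ i)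
    have hAi : A i = 0 := le_antisymm (by linarith [hBnn i]) (hAnn i)
    exact (entA (p i) (q i) (hppos i) (hq0 i)).2 hAi

private lemma exists_clip {n : ℕ} (l u : Fin n → ℝ)
    (hl0 : ∀ i, 0 ≤ l i) (hlu : ∀ i, l i ≤ u i) (hu1 : ∀ i, u i ≤ 1)
    (hsl : ∑ i, l i < 1) (hsu : 1 < ∑ i, u i) :
    ∃ x : ℝ, (∑ i, min (max x (l i)) (u i)) = 1 := by
  set f : ℝ → ℝ := fun x => ∑ i, min (max x (l i)) (u i) with hf
  have hcont : Continuous f :=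
    continuous_finset_sum _ fun i _ => (continuous_id.max continuous_const).min continuous_const
  have hf0 : f 0 = ∑ i, l i :=
    Finset.sum_congr rfl fun i _ => by rw [max_eq_right (hl0 i), min_eq_left (hlu i)]
  have hf1 : f 1 = ∑ i, u i :=
    Finset.sum_congr rfl fun i _ => by
      rw [max_eq_left ((hlu i).trans (hu1 i)), min_eq_right (hu1 i)]
  have hmem : (1:ℝ) ∈ Set.Icc (f 0) (f 1) := by
    constructor <;> [rw [hf0]; rw [hf1]] <;> linarith
  obtain ⟨x, _, hx⟩ := intermediate_value_Icc (by norm_num : (0:ℝ) ≤ 1) hcont.continuousOn hmem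
  exact ⟨x, hx⟩

private lemma clip_pos {n : ℕ} (l u : Fin n → ℝ)
    (hl0 : ∀ i, 0 ≤ l i) (hlu : ∀ i, l i ≤ u i)
    (hsl : ∑ i, l i < 1) (x : ℝ)
    (hsx : (∑ i, min (max x (l i)) (u i)) = 1) : 0 < x := by
  by_contra hle
  push_neg at hle
  have : (∑ i, min (max x (l i)) (u i)) = ∑ i, l i :=
    Finset.sum_congr rfl fun i _ => by
      rw [max_eq_right (hle.trans (hl0 i)), min_eq_left (hlu i)]
  rw [this] at hsx
  linarith

/-- For intervals `[l i, u i] ⊆ [0,1]` with `0 < u i`, `Σ l i < 1` and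
`Σ u i > 1`, and the credal set `𝒫 = {p ∈ Δ_n : l i ≤ p i ≤ u i}`, a point `p` maximizes
the Shannon entropy `H(p) = −Σ p i log p i` over `𝒫` iff there exists `x ∈ ℝ` with
`Σ min(max(x, l i), u i) = 1` and `p i = min(max(x, l i), u i)` for all `i`. -/
theorem stmt_11 {n : ℕ} (l u : Fin n → ℝ)
    (hl0 : ∀ i, 0 ≤ l i) (hlu : ∀ i, l i ≤ u i) (hu1 : ∀ i, u i ≤ 1)
    (hupos : ∀ i, 0 < u i)
    (hsl : ∑ i, l i < 1) (hsu : 1 < ∑ i, u i)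
    (p : Fin n → ℝ) :
    ((∀ i, 0 ≤ p i) ∧ (∑ i, p i) = 1 ∧ (∀ i, l i ≤ p i ∧ p i ≤ u i) ∧
      (∀ q : Fin n → ℝ, (∀ i, 0 ≤ q i) → (∑ i, q i) = 1 → (∀ i, l i ≤ q i ∧ q i ≤ u i) →
        -∑ i, q i * Real.log (q i) ≤ -∑ i, p i * Real.log (p i)))
    ↔ ∃ x : ℝ, (∑ i, min (max x (l i)) (u i)) = 1 ∧
        ∀ i, p i = min (max x (l i)) (u i) := by
  constructor
  · rintro ⟨hp0, hp1, hplu, hpmax⟩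
    obtain ⟨x, hx1⟩ := exists_clip l u hl0 hlu hu1 hsl hsu
    have hxpos : 0 < x := clip_pos l u hl0 hlu hsl x hx1
    refine ⟨x, hx1, ?_⟩
    -- p* := clip is feasible
    set ps : Fin n → ℝ := fun i => min (max x (l i)) (u i) with hps
    have hps0 : ∀ i, 0 ≤ ps i := fun i =>
      le_min (le_trans (hl0 i) (le_max_right _ _)) (hupos i).le
    have hpslu : ∀ i, l i ≤ ps i ∧ ps i ≤ u i := fun i =>
      ⟨le_min (le_max_right _ _) (hlu i), min_le_right _ _⟩
    have hle := hpmax ps hps0 hx1 hpslu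
    have hkey := clip_max l u hlu hupos x hxpos hx1 p hp0 hp1 hplu
    have heq : (∑ i, p i * Real.log (p i)) =
        ∑ i, ps i * Real.log (ps i) := le_antisymm (by linarith) hkey.1
    intro i
    exact hkey.2 heq i
  · rintro ⟨x, hx1, hpx⟩
    have hxpos : 0 < x := clip_pos l u hl0 hlu hsl x hx1
    have hpeq : p = fun i => min (max x (l i)) (u i) := funext hpx
    subst hpeq
    refine ⟨fun i => le_min (le_trans (hl0 i) (le_max_right _ _)) (hupos i).le,
      hx1, fun i => ⟨le_min (le_max_right _ _) (hlu i), min_le_right _ _⟩, ?_⟩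
    intro q hq0 hq1 hqlu
    have := (clip_max l u hlu hupos x hxpos hx1 q hq0 hq1 hqlu).1
    linarith
end

section
/- Let μ be a 2-monotone lower probability on Ω = {1,…,n}, i.e., a supermodular set function μ : 2^Ω → [0,1] with μ(∅) = 0, μ(Ω) = 1, and μ(A) ≤ μ(B) for A ⊆ B, and let μ̄(A) = 1 − μ(Ω∖A) be its dual. Then there exists p in the credal set P(μ) = {p ∈ Δ_n : Σ_{i∈A} p_i ≥ μ(A) for all A ⊆ Ω} with p_i > 0 for all i if and only if μ̄({i}) > 0 for all i ∈ Ω. -/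
section Aux

variable {n : ℕ}

/-- Elements strictly below `j` in the order induced by key `k`. -/
def below (k : Fin n → ℕ) (j : Fin n) : Finset (Fin n) :=
  Finset.univ.filter fun m => k m < k j

/-- Marginal vector component. -/
def pv (μ : Finset (Fin n) → ℝ) (k : Fin n → ℕ) (j : Fin n) : ℝ :=
  μ (below k j ∪ {j}) - μ (below k j)

lemma pv_nonneg (μ : Finset (Fin n) → ℝ)
    (hmono : ∀ A B : Finset (Fin n), A ⊆ B → μ A ≤ μ B)
    (k : Fin n → ℕ) (j : Fin n) : 0 ≤ pv μ k j := by
  have := hmono (below k j) (below k j ∪ {j}) Finset.subset_union_left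
  simp only [pv]; linarith

lemma chain_ge (μ : Finset (Fin n) → ℝ) (h0 : μ ∅ = 0)
    (hsup : ∀ A B : Finset (Fin n), μ A + μ B ≤ μ (A ∪ B) + μ (A ∩ B))
    (k : Fin n → ℕ) (hk : Function.Injective k) (A : Finset (Fin n)) :
    μ A ≤ ∑ j ∈ A, pv μ k j := by
  induction A using Finset.strongInduction with
  | _ A ih =>
    rcases A.eq_empty_or_nonempty with rfl | hA
    · simp [h0]
    · obtain ⟨j, hjA, hjmax⟩ := A.exists_max_image k hA
      have hjB : j ∉ below k j := by simp [below]
      have hlt : ∀ m ∈ A, m ≠ j → k m < k j := fun m hm hne =>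
        lt_of_le_of_ne (hjmax m hm) (fun h => hne (hk h))
      have hunion : A ∪ below k j = below k j ∪ {j} := by
        ext m
        simp only [Finset.mem_union, Finset.mem_singleton, below, Finset.mem_filter,
          Finset.mem_univ, true_and]
        constructor
        · rintro (hm | hm)
          · by_cases h : m = j
            · exact Or.inr h
            · exact Or.inl (hlt m hm h)
          · exact Or.inl hm
        · rintro (hm | rfl)
          · exact Or.inr hm
          · exact Or.inl hjA
      have hinter : A ∩ below k j = A \ {j} := by
        ext m
        simp only [Finset.mem_inter, Finset.mem_sdiff, Finset.mem_singleton, below,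
          Finset.mem_filter, Finset.mem_univ, true_and]
        constructor
        · rintro ⟨hm, hlt'⟩
          exact ⟨hm, fun h => by simp [h] at hlt'⟩
        · rintro ⟨hm, hne⟩
          exact ⟨hm, hlt m hm hne⟩
      have hs := hsup A (below k j)
      rw [hunion, hinter] at hs
      have hss : A \ {j} ⊂ A := Finset.sdiff_ssubset (by simpa using hjA) (by simp)
      have hih := ih (A \ {j}) hss
      have hsum : ∑ m ∈ A, pv μ k m = pv μ k j + ∑ m ∈ A \ {j}, pv μ k m := by
        rw [← Finset.sum_erase_add A _ hjA, Finset.sdiff_singleton_eq_erase]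
        ring
      rw [hsum]
      have hpvj : pv μ k j = μ (below k j ∪ {j}) - μ (below k j) := rfl
      linarith

lemma chain_eq (μ : Finset (Fin n) → ℝ) (h0 : μ ∅ = 0)
    (k : Fin n → ℕ) (hk : Function.Injective k) (A : Finset (Fin n))
    (hinit : ∀ j ∈ A, below k j ⊆ A) :
    ∑ j ∈ A, pv μ k j = μ A := by
  induction A using Finset.strongInduction with
  | _ A ih =>
    rcases A.eq_empty_or_nonempty with rfl | hA
    · simp [h0]
    · obtain ⟨j, hjA, hjmax⟩ := A.exists_max_image k hA
      have hjB : j ∉ below k j := by simp [below]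
      have hlt : ∀ m ∈ A, m ≠ j → k m < k j := fun m hm hne =>
        lt_of_le_of_ne (hjmax m hm) (fun h => hne (hk h))
      have hBeq : below k j = A \ {j} := by
        ext m
        simp only [below, Finset.mem_filter, Finset.mem_univ, true_and, Finset.mem_sdiff,
          Finset.mem_singleton]
        constructor
        · intro hm
          have hmA : m ∈ A := hinit j hjA (by simp [below, hm])
          exact ⟨hmA, fun h => by simp [h] at hm⟩
        · rintro ⟨hm, hne⟩
          exact hlt m hm hne
      have hUeq : below k j ∪ {j} = A := by
        rw [hBeq]
        ext m
        simp only [Finset.mem_union, Finset.mem_sdiff, Finset.mem_singleton]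
        constructor
        · rintro (⟨hm, _⟩ | rfl) <;> [exact hm; exact hjA]
        · intro hm
          by_cases h : m = j
          · exact Or.inr h
          · exact Or.inl ⟨hm, h⟩
      have hinit' : ∀ m ∈ A \ {j}, below k m ⊆ A \ {j} := by
        intro m hm x hx
        simp only [Finset.mem_sdiff, Finset.mem_singleton] at hm ⊢
        have hxA : x ∈ A := hinit m hm.1 hx
        refine ⟨hxA, fun h => ?_⟩
        subst h
        simp only [below, Finset.mem_filter] at hx
        exact absurd (lt_trans hx.2 (hlt m hm.1 hm.2)) (lt_irrefl _)
      have hss : A \ {j} ⊂ A := Finset.sdiff_ssubset (by simpa using hjA) (by simp)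
      have hih := ih (A \ {j}) hss hinit'
      have hsum : ∑ m ∈ A, pv μ k m = pv μ k j + ∑ m ∈ A \ {j}, pv μ k m := by
        rw [← Finset.sum_erase_add A _ hjA, Finset.sdiff_singleton_eq_erase]
        ring
      rw [hsum, hih]
      simp only [pv]
      rw [hUeq, hBeq]
      ring

/-- The key function putting `i` last. -/
def key (i : Fin n) (m : Fin n) : ℕ := if m = i then n else m.val

lemma key_inj (i : Fin n) : Function.Injective (key i) := by
  intro a b hab
  unfold key at hab
  by_cases ha : a = i <;> by_cases hb : b = i
  · exact ha.trans hb.symm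
  · simp [ha, hb] at hab
    exact absurd hab.symm (Nat.ne_of_lt b.isLt)
  · simp [ha, hb] at hab
    exact absurd hab (Nat.ne_of_lt a.isLt)
  · simp [ha, hb] at hab
    exact Fin.ext hab

lemma below_key_self (i : Fin n) : below (key i) i = Finset.univ \ {i} := by
  ext m
  simp only [below, Finset.mem_filter, Finset.mem_univ, true_and, Finset.mem_sdiff,
    Finset.mem_singleton, key, if_pos rfl]
  by_cases h : m = i <;> simp [h, Fin.isLt]

end Aux

/-- For a 2-monotone (supermodular) lower probability `μ` on `Ω = {1,…,n}`
with dual `μ̄(A) = 1 − μ(Ω∖A)`, there exists `p` in the credal set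
`P(μ) = {p ∈ Δ_n : p(A) ≥ μ(A) ∀A}` with `p i > 0` for all `i` iff `μ̄({i}) > 0` for all
`i ∈ Ω`. -/
theorem stmt_16 {n : ℕ}
    (μ : Finset (Fin n) → ℝ)
    (h0 : μ ∅ = 0) (h1 : μ Finset.univ = 1)
    (hrange : ∀ A : Finset (Fin n), 0 ≤ μ A ∧ μ A ≤ 1)
    (hmono : ∀ A B : Finset (Fin n), A ⊆ B → μ A ≤ μ B)
    (hsup : ∀ A B : Finset (Fin n), μ A + μ B ≤ μ (A ∪ B) + μ (A ∩ B)) :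
    (∃ p : Fin n → ℝ, (∀ i, 0 ≤ p i) ∧ (∑ i, p i) = 1 ∧
        (∀ A : Finset (Fin n), μ A ≤ ∑ i ∈ A, p i) ∧ (∀ i, 0 < p i))
    ↔ ∀ i : Fin n, 0 < 1 - μ (Finset.univ \ {i}) := by
  have hn : 0 < n := by
    rcases Nat.eq_zero_or_pos n with rfl | h
    · exfalso
      rw [Finset.univ_eq_empty, h0] at h1
      norm_num at h1
    · exact h
  constructor
  · rintro ⟨p, hp0, hp1, hpA, hppos⟩ i
    have h := hpA (Finset.univ \ {i})
    have hsplit : ∑ j ∈ Finset.univ \ {i}, p j = (∑ j, p j) - p i := by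
      rw [Finset.sdiff_singleton_eq_erase, Finset.sum_erase_eq_sub (Finset.mem_univ i)]
    rw [hsplit, hp1] at h
    have := hppos i
    linarith
  · intro hdual
    set q : Fin n → ℝ := fun j => (∑ i, pv μ (key i) j) / n with hq
    have hnR : (0:ℝ) < n := by exact_mod_cast hn
    have hinit : ∀ i : Fin n, ∀ j ∈ (Finset.univ : Finset (Fin n)),
        below (key i) j ⊆ Finset.univ := fun _ _ _ _ _ => Finset.mem_univ _
    refine ⟨q, ?_, ?_, ?_, ?_⟩
    · intro j
      apply div_nonneg _ (le_of_lt hnR)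
      exact Finset.sum_nonneg fun i _ => pv_nonneg μ hmono (key i) j
    · rw [show ∑ j, q j = (∑ j, ∑ i, pv μ (key i) j) / n by
        rw [← Finset.sum_div]]
      rw [Finset.sum_comm]
      have : ∀ i : Fin n, ∑ j, pv μ (key i) j = 1 := fun i => by
        rw [chain_eq μ h0 (key i) (key_inj i) Finset.univ (hinit i), h1]
      simp only [this, Finset.sum_const, Finset.card_univ, Fintype.card_fin, nsmul_eq_mul,
        mul_one]
      field_simp
    · intro A
      have : ∀ i : Fin n, μ A ≤ ∑ j ∈ A, pv μ (key i) j := fun i =>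
        chain_ge μ h0 hsup (key i) (key_inj i) A
      have hsum : (n : ℝ) * μ A ≤ ∑ i, ∑ j ∈ A, pv μ (key i) j := by
        calc (n : ℝ) * μ A = ∑ _i : Fin n, μ A := by
              simp [Finset.sum_const, Finset.card_univ]
          _ ≤ _ := Finset.sum_le_sum fun i _ => this i
      rw [show ∑ j ∈ A, q j = (∑ j ∈ A, ∑ i, pv μ (key i) j) / n by rw [← Finset.sum_div]]
      rw [Finset.sum_comm]
      rw [le_div_iff₀ hnR, mul_comm]
      exact hsum
    · intro j
      have hkey : pv μ (key j) j = 1 - μ (Finset.univ \ {j}) := by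
        simp only [pv, below_key_self]
        have huu : Finset.univ \ {j} ∪ {j} = (Finset.univ : Finset (Fin n)) := by
          rw [Finset.sdiff_union_self_eq_union]
          simp
        rw [huu, h1]
      have hpos : 0 < pv μ (key j) j := hkey ▸ hdual j
      have hle : pv μ (key j) j ≤ ∑ i, pv μ (key i) j :=
        Finset.single_le_sum (fun i _ => pv_nonneg μ hmono (key i) j) (Finset.mem_univ j)
      exact div_pos (lt_of_lt_of_le hpos hle) hnR
end

section
/- Let ν : 2^Ω → ℝ be a submodular set function on Ω = {1,…,n} with ν(∅) = 0, let w ∈ ℝ^n, and let φ be a permutation of Ω with w_{φ(1)} ≥ w_{φ(2)} ≥ … ≥ w_{φ(n)}. Define S_0 = ∅ and S_i = {φ(1),…,φ(i)} for i = 1,…,n, and the greedy vector x by x_{φ(i)} = ν(S_i) − ν(S_{i−1}). Then x belongs to the base polyhedron B(ν) and x maximizes the linear functional y ↦ wᵀy over B(ν). -/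
/-- Prefix sets of the greedy order. -/
def Sgr {n : ℕ} (φ : Equiv.Perm (Fin n)) (m : ℕ) : Finset (Fin n) :=
  (Finset.univ.filter fun j : Fin n => (j : ℕ) < m).image φ

lemma Sgr_zero {n : ℕ} (φ : Equiv.Perm (Fin n)) : Sgr φ 0 = ∅ := by
  simp [Sgr]

lemma Sgr_top {n : ℕ} (φ : Equiv.Perm (Fin n)) : Sgr φ n = Finset.univ := by
  have h : (Finset.univ.filter fun j : Fin n => (j : ℕ) < n) = Finset.univ := by
    ext j; simp [j.isLt]
  simp [Sgr, h]

lemma Sgr_succ {n : ℕ} (φ : Equiv.Perm (Fin n)) (k : ℕ) (hk : k < n) :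
    Sgr φ (k + 1) = insert (φ ⟨k, hk⟩) (Sgr φ k) := by
  have h : (Finset.univ.filter fun j : Fin n => (j : ℕ) < k + 1)
      = insert (⟨k, hk⟩ : Fin n) (Finset.univ.filter fun j : Fin n => (j : ℕ) < k) := by
    ext j
    simp [Fin.ext_iff]
    omega
  simp only [Sgr, h, Finset.image_insert]

lemma Sgr_notmem {n : ℕ} (φ : Equiv.Perm (Fin n)) (k : ℕ) (hk : k < n) :
    φ ⟨k, hk⟩ ∉ Sgr φ k := by
  simp only [Sgr, Finset.mem_image, Finset.mem_filter]
  rintro ⟨j, ⟨-, hj⟩, hφ⟩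
  have hjk : j = ⟨k, hk⟩ := φ.injective hφ
  rw [hjk] at hj
  simp at hj

lemma abel_aux (c G : ℕ → ℝ) (N : ℕ) :
    ∑ k ∈ Finset.range N, c k * (G (k + 1) - G k)
      = ∑ k ∈ Finset.range N, (c k - c (k + 1)) * G (k + 1) + c N * G N - c 0 * G 0 := by
  induction N with
  | zero => simp
  | succ m ih => rw [Finset.sum_range_succ, Finset.sum_range_succ, ih]; ring

/-- Greedy algorithm for submodular functions. Let `ν` be submodular with
`ν ∅ = 0` on `Ω = {1,…,n}`, `w ∈ ℝ^n`, and `φ` a permutation with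
`w (φ 1) ≥ … ≥ w (φ n)`. With `S_i = {φ 1, …, φ i}` and the greedy vector
`x (φ i) = ν S_i − ν S_{i−1}`, the vector `x` belongs to the base polyhedron `B(ν)` and
maximizes `y ↦ wᵀy` over `B(ν)`. -/
theorem stmt_17 {n : ℕ}
    (ν : Finset (Fin n) → ℝ) (h0 : ν ∅ = 0)
    (hsubm : ∀ A B : Finset (Fin n), ν (A ∪ B) + ν (A ∩ B) ≤ ν A + ν B)
    (w : Fin n → ℝ) (φ : Equiv.Perm (Fin n))
    (hsort : ∀ i j : Fin n, i ≤ j → w (φ j) ≤ w (φ i))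
    (x : Fin n → ℝ)
    (hx : ∀ i : Fin n,
      x (φ i) =
        ν ((Finset.univ.filter fun j : Fin n => (j : ℕ) < (i : ℕ) + 1).image φ)
          - ν ((Finset.univ.filter fun j : Fin n => (j : ℕ) < (i : ℕ)).image φ)) :
    ((∀ A : Finset (Fin n), ∑ i ∈ A, x i ≤ ν A) ∧ (∑ i, x i) = ν Finset.univ) ∧
    ∀ y : Fin n → ℝ,
      ((∀ A : Finset (Fin n), ∑ i ∈ A, y i ≤ ν A) ∧ (∑ i, y i) = ν Finset.univ) →
      ∑ i, w i * y i ≤ ∑ i, w i * x i := by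
  classical
  have hxk : ∀ (k : ℕ) (hk : k < n),
      x (φ ⟨k, hk⟩) = ν (Sgr φ (k + 1)) - ν (Sgr φ k) := fun k hk => hx ⟨k, hk⟩
  -- part 1a
  have part1a : ∀ A : Finset (Fin n), ∑ i ∈ A, x i ≤ ν A := by
    intro A
    have key : ∀ (k : ℕ) (hk : k < n),
        (if φ ⟨k, hk⟩ ∈ A then x (φ ⟨k, hk⟩) else 0)
          ≤ ν (A ∩ Sgr φ (k + 1)) - ν (A ∩ Sgr φ k) := by
      intro k hk
      by_cases hA : φ ⟨k, hk⟩ ∈ A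
      · rw [if_pos hA, hxk k hk]
        have h1 : (A ∩ Sgr φ (k + 1)) ∪ Sgr φ k = Sgr φ (k + 1) := by
          rw [Sgr_succ φ k hk]
          ext z
          simp only [Finset.mem_union, Finset.mem_inter, Finset.mem_insert]
          constructor
          · rintro (⟨-, h⟩ | h)
            · exact h
            · exact Or.inr h
          · rintro (rfl | h)
            · exact Or.inl ⟨hA, Or.inl rfl⟩
            · exact Or.inr h
        have h2 : (A ∩ Sgr φ (k + 1)) ∩ Sgr φ k = A ∩ Sgr φ k := by
          rw [Sgr_succ φ k hk]
          ext z
          simp only [Finset.mem_inter, Finset.mem_insert]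
          tauto
        have := hsubm (A ∩ Sgr φ (k + 1)) (Sgr φ k)
        rw [h1, h2] at this
        linarith
      · rw [if_neg hA]
        have h3 : A ∩ Sgr φ (k + 1) = A ∩ Sgr φ k := by
          rw [Sgr_succ φ k hk]
          ext z
          simp only [Finset.mem_inter, Finset.mem_insert]
          constructor
          · rintro ⟨hz, (rfl | h)⟩
            · exact absurd hz hA
            · exact ⟨hz, h⟩
          · rintro ⟨hz, h⟩
            exact ⟨hz, Or.inr h⟩
        rw [h3]
        linarith
    have e1 : ∑ i ∈ A, x i
        = ∑ k ∈ Finset.range n,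
            (if h : k < n then (if φ ⟨k, h⟩ ∈ A then x (φ ⟨k, h⟩) else 0) else 0) := by
      rw [← Fin.sum_univ_eq_sum_range
        (fun k => if h : k < n then (if φ ⟨k, h⟩ ∈ A then x (φ ⟨k, h⟩) else 0) else 0) n]
      have e2 : ∑ i : Fin n,
          (if h : (i : ℕ) < n then (if φ ⟨(i : ℕ), h⟩ ∈ A then x (φ ⟨(i : ℕ), h⟩) else 0) else 0)
          = ∑ i : Fin n, (if φ i ∈ A then x (φ i) else 0) := by
        apply Finset.sum_congr rfl
        intro i _
        simp [i.isLt]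
      rw [e2, Equiv.sum_comp φ (fun i => if i ∈ A then x i else 0)]
      rw [Finset.sum_ite_mem]
      simp
    rw [e1]
    have e3 : ∑ k ∈ Finset.range n, (ν (A ∩ Sgr φ (k + 1)) - ν (A ∩ Sgr φ k)) = ν A := by
      rw [Finset.sum_range_sub (fun m => ν (A ∩ Sgr φ m))]
      rw [Sgr_zero, Sgr_top]
      simp [h0]
    rw [← e3]
    apply Finset.sum_le_sum
    intro k hk
    rw [Finset.mem_range] at hk
    rw [dif_pos hk]
    exact key k hk
  -- part 1b
  have part1b : (∑ i, x i) = ν Finset.univ := by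
    have e1 : ∑ i, x i
        = ∑ k ∈ Finset.range n, (if h : k < n then x (φ ⟨k, h⟩) else 0) := by
      rw [← Fin.sum_univ_eq_sum_range (fun k => if h : k < n then x (φ ⟨k, h⟩) else 0) n]
      rw [← Equiv.sum_comp φ x]
      apply Finset.sum_congr rfl
      intro i _
      simp [i.isLt]
    rw [e1]
    have e2 : ∀ k ∈ Finset.range n,
        (if h : k < n then x (φ ⟨k, h⟩) else 0) = ν (Sgr φ (k + 1)) - ν (Sgr φ k) := by
      intro k hk
      rw [Finset.mem_range] at hk
      rw [dif_pos hk, hxk k hk]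
    rw [Finset.sum_congr rfl e2, Finset.sum_range_sub (fun m => ν (Sgr φ m))]
    rw [Sgr_zero, Sgr_top, h0]
    ring
  refine ⟨⟨part1a, part1b⟩, ?_⟩
  -- part 2
  intro y ⟨hy1, hy2⟩
  set c : ℕ → ℝ := fun k => if h : k < n then w (φ ⟨k, h⟩) else 0 with hc
  have hcn : c n = 0 := dif_neg (lt_irrefl n)
  set Yf : ℕ → ℝ := fun m => ∑ i ∈ Sgr φ m, y i with hYf
  set gf : ℕ → ℝ := fun m => ν (Sgr φ m) with hgf
  have hY0 : Yf 0 = 0 := by simp [hYf, Sgr_zero]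
  have hg0 : gf 0 = 0 := by simp [hgf, Sgr_zero, h0]
  have hYn : Yf n = gf n := by simp [hYf, hgf, Sgr_top, hy2]
  have hyk : ∀ (k : ℕ) (hk : k < n), y (φ ⟨k, hk⟩) = Yf (k + 1) - Yf k := by
    intro k hk
    simp only [hYf]
    rw [Sgr_succ φ k hk, Finset.sum_insert (Sgr_notmem φ k hk)]
    ring
  have ey : ∑ i, w i * y i = ∑ k ∈ Finset.range n, c k * (Yf (k + 1) - Yf k) := by
    rw [← Fin.sum_univ_eq_sum_range (fun k => c k * (Yf (k + 1) - Yf k)) n]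
    rw [← Equiv.sum_comp φ (fun i => w i * y i)]
    apply Finset.sum_congr rfl
    intro i _
    have h1 : c (i : ℕ) = w (φ i) := by simp [hc, i.isLt]
    have h2 : y (φ i) = Yf ((i : ℕ) + 1) - Yf (i : ℕ) := by
      have := hyk (i : ℕ) i.isLt
      simpa using this
    simp only [h1, h2]
  have ex : ∑ i, w i * x i = ∑ k ∈ Finset.range n, c k * (gf (k + 1) - gf k) := by
    rw [← Fin.sum_univ_eq_sum_range (fun k => c k * (gf (k + 1) - gf k)) n]
    rw [← Equiv.sum_comp φ (fun i => w i * x i)]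
    apply Finset.sum_congr rfl
    intro i _
    have h1 : c (i : ℕ) = w (φ i) := by simp [hc, i.isLt]
    have h2 : x (φ i) = gf ((i : ℕ) + 1) - gf (i : ℕ) := by
      have := hxk (i : ℕ) i.isLt
      simpa [hgf] using this
    simp only [h1, h2]
  rw [ey, ex, abel_aux, abel_aux, hcn, hY0, hg0]
  simp only [zero_mul, mul_zero, add_zero, sub_zero]
  apply Finset.sum_le_sum
  intro k hk
  rw [Finset.mem_range] at hk
  rcases eq_or_lt_of_le (Nat.succ_le_of_lt hk) with heq | hlt
  · -- k + 1 = n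
    have h1 : k + 1 = n := heq
    rw [h1, hYn]
  · -- k + 1 < n
    have hco : 0 ≤ c k - c (k + 1) := by
      rw [hc]
      simp only [dif_pos hk, dif_pos hlt]
      have hle : (⟨k, hk⟩ : Fin n) ≤ ⟨k + 1, hlt⟩ := by
        simp [Fin.le_def]
      linarith [hsort ⟨k, hk⟩ ⟨k + 1, hlt⟩ hle]
    have hYg : Yf (k + 1) ≤ gf (k + 1) := hy1 (Sgr φ (k + 1))
    exact mul_le_mul_of_nonneg_left hYg hco
end
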